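/- Let a ∈ C^{1,1}(S^{d−1}) and define f(x) = a(x/|x|)·|x| for x ≠ 0, f(0) = 0. Then f is a difference of two convex functions on ℝ^d, and there is a universal constant C such that ‖f‖_{DC(B_R)} ≤ C·R·‖a‖_{C^{1,1}} for all R > 0. -/

import Mathlib

/-!
Write `f(x) = A(x) ‖x‖` with `A(x) = a(x / ‖x‖)`. The function `g = f + 6M‖·‖` is positively
homogeneous, so it is convex as soon as it is subadditive. If `x + y = ‖x + y‖ w` with `‖w‖ = 1`,
the linear form `L = A(w) ⟪w, ·⟫ + DA(w)` agrees with `f` at `x + y`, by Euler's relation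
`DA(w) w = 0`. A second-order Taylor bound for `A` on the sphere gives
`L(u) ≤ A(u) + 3M ‖u - w‖²` for unit vectors `u`, that is `L(x) ≤ f(x) + 6M (‖x‖ - ⟪w, x⟫)`
for all `x`. Adding this for `x` and `y` gives `g(x + y) ≤ g(x) + g(y)`. On `B_R` both `g` and
`6M‖·‖` are bounded by `7MR`.
-/

open Set Metric
open scoped ENNReal RealInnerProductSpace

/-- The DC norm of a function on a set `U`: the infimum of `‖f₁‖_{∞,U} + ‖f₂‖_{∞,U}` over all
decompositions `f = f₁ − f₂` of `f` as a difference of convex functions on `U` (with value `∞`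
if no bounded decomposition exists). -/
noncomputable def dcNorm {E : Type*} [NormedAddCommGroup E] [NormedSpace ℝ E]
    (U : Set E) (f : E → ℝ) : ℝ≥0∞ :=
  sInf {r : ℝ≥0∞ | ∃ (f₁ f₂ : E → ℝ) (M₁ M₂ : ℝ),
    ConvexOn ℝ U f₁ ∧ ConvexOn ℝ U f₂ ∧ (∀ x ∈ U, f x = f₁ x - f₂ x) ∧
    (∀ x ∈ U, |f₁ x| ≤ M₁) ∧ (∀ x ∈ U, |f₂ x| ≤ M₂) ∧ r = ENNReal.ofReal (M₁ + M₂)}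

theorem mem_annulus_of_norm_eq_one {E : Type*} [SeminormedAddCommGroup E] {u : E}
    (hu : ‖u‖ = 1) : u ∈ {y : E | 1 / 2 < ‖y‖ ∧ ‖y‖ < 2} := by
  norm_num [hu]

section NormedSpace

variable {E F : Type*} [NormedAddCommGroup E] [NormedSpace ℝ E]
  [NormedAddCommGroup F] [NormedSpace ℝ F]

theorem dcNorm_le_ofReal {U : Set E} {f f₁ f₂ : E → ℝ} {M₁ M₂ : ℝ}
    (h₁ : ConvexOn ℝ U f₁) (h₂ : ConvexOn ℝ U f₂) (hf : ∀ x ∈ U, f x = f₁ x - f₂ x)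
    (hM₁ : ∀ x ∈ U, |f₁ x| ≤ M₁) (hM₂ : ∀ x ∈ U, |f₂ x| ≤ M₂) :
    dcNorm U f ≤ ENNReal.ofReal (M₁ + M₂) :=
  sInf_le ⟨f₁, f₂, M₁, M₂, h₁, h₂, hf, hM₁, hM₂, rfl⟩

theorem convexOn_univ_of_subadditive {g : E → ℝ} (hadd : ∀ x y, g (x + y) ≤ g x + g y)
    (hsmul : ∀ t : ℝ, 0 ≤ t → ∀ x, g (t • x) = t * g x) : ConvexOn ℝ univ g := by
  refine ⟨convex_univ, fun x _ y _ p q hp hq _ => ?_⟩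
  calc g (p • x + q • y) ≤ g (p • x) + g (q • y) := hadd _ _
    _ = p • g x + q • g y := by rw [hsmul p hp, hsmul q hq, smul_eq_mul, smul_eq_mul]

theorem inv_norm_smul_smul_of_pos {t : ℝ} (ht : 0 < t) (x : E) :
    ‖t • x‖⁻¹ • t • x = ‖x‖⁻¹ • x := by
  rw [norm_smul, Real.norm_of_nonneg ht.le, smul_smul, mul_inv, mul_right_comm,
    inv_mul_cancel₀ ht.ne', one_mul]

theorem norm_add_norm_le_of_mem_segment {x y z : E} (hz : z ∈ segment ℝ x y) :
    ‖x‖ + ‖y‖ ≤ 2 * ‖z‖ + ‖x - y‖ := by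
  have hsplit := dist_add_dist_of_mem_segment hz
  rw [dist_eq_norm, dist_eq_norm, dist_eq_norm] at hsplit
  linarith [norm_le_norm_add_norm_sub' x z, norm_le_norm_add_norm_sub' y z, norm_sub_rev y z]

theorem segment_subset_annulus {u w : E} (hu : ‖u‖ = 1) (hw : ‖w‖ = 1) (huw : ‖u - w‖ < 1) :
    segment ℝ w u ⊆ {y : E | 1 / 2 < ‖y‖ ∧ ‖y‖ < 2} := by
  intro z hz
  have hlow := norm_add_norm_le_of_mem_segment hz
  have hup : ‖z‖ ≤ 1 := mem_closedBall_zero_iff.1 <|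
    (convex_closedBall (0 : E) 1).segment_subset (by simp [hw]) (by simp [hu]) hz
  rw [hu, hw, norm_sub_rev] at hlow
  constructor <;> linarith

theorem HasFDerivAt.apply_self_eq_zero {A : E → F} {L : E →L[ℝ] F} {x : E}
    (hA : ∀ t : ℝ, 0 < t → A (t • x) = A x) (h : HasFDerivAt A L x) : L x = 0 := by
  have hray : HasDerivAt (fun t : ℝ => A (t • x)) (L x) 1 := by
    rw [← one_smul ℝ x] at h
    simpa [Function.comp_def] using
      h.comp_hasDerivAt (1 : ℝ) ((hasDerivAt_id (1 : ℝ)).smul_const x)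
  have hconst : (fun t : ℝ => A (t • x)) =ᶠ[nhds 1] fun _ => A x :=
    (eventually_gt_nhds one_pos).mono hA
  exact hray.unique ((hasDerivAt_const 1 (A x)).congr_of_eventuallyEq hconst)

theorem Convex.norm_image_sub_sub_le_of_lipschitzOnWith {f : E → F} {f' : E → E →L[ℝ] F}
    {s : Set E} {K : NNReal} {x y : E} (hs : Convex ℝ s)
    (hf : ∀ z ∈ s, HasFDerivWithinAt f (f' z) s z) (hf' : LipschitzOnWith K f' s)
    (hx : x ∈ s) (hy : y ∈ s) :
    ‖f y - f x - f' x (y - x)‖ ≤ K * ‖y - x‖ ^ 2 := by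
  have hseg : segment ℝ x y ⊆ s := hs.segment_subset hx hy
  have hbound : ∀ z ∈ segment ℝ x y, ‖f' z - f' x‖ ≤ K * ‖y - x‖ := by
    intro z hz
    refine hf'.norm_sub_le_of_le (hseg hz) hx ?_
    have := dist_add_dist_of_mem_segment hz
    rw [dist_eq_norm, dist_eq_norm, dist_eq_norm] at this
    linarith [norm_sub_rev x z, norm_sub_rev x y, norm_nonneg (z - y)]
  calc ‖f y - f x - f' x (y - x)‖ ≤ K * ‖y - x‖ * ‖y - x‖ :=
        norm_image_sub_le_of_norm_hasFDerivWithin_le'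
          (fun z hz => (hf z (hseg hz)).mono hseg) hbound (convex_segment x y)
          (left_mem_segment ℝ x y) (right_mem_segment ℝ x y)
    _ = K * ‖y - x‖ ^ 2 := by ring

structure C11BoundOnAnnulus (A : E → ℝ) (A' : E → E →L[ℝ] ℝ) (M : ℝ) : Prop where
  hasFDerivAt : ∀ x ∈ {y : E | 1 / 2 < ‖y‖ ∧ ‖y‖ < 2}, HasFDerivAt A (A' x) x
  abs_apply_le : ∀ x ∈ {y : E | 1 / 2 < ‖y‖ ∧ ‖y‖ < 2}, |A x| ≤ M
  norm_apply_le : ∀ x ∈ {y : E | 1 / 2 < ‖y‖ ∧ ‖y‖ < 2}, ‖A' x‖ ≤ M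
  lipschitzOnWith : LipschitzOnWith M.toNNReal A' {y : E | 1 / 2 < ‖y‖ ∧ ‖y‖ < 2}

theorem C11BoundOnAnnulus.abs_le_of_ne_zero {A : E → ℝ} {A' : E → E →L[ℝ] ℝ} {M : ℝ}
    (h : C11BoundOnAnnulus A A' M) (hA : ∀ t : ℝ, 0 < t → ∀ x, A (t • x) = A x) {x : E}
    (hx : x ≠ 0) : |A x| ≤ M := by
  rw [← hA ‖x‖⁻¹ (by positivity) x]
  exact h.abs_apply_le _ (mem_annulus_of_norm_eq_one (norm_smul_inv_norm hx))

end NormedSpace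

section InnerProductSpace

variable {E : Type*} [NormedAddCommGroup E] [InnerProductSpace ℝ E]
  {A : E → ℝ} {A' : E → E →L[ℝ] ℝ} {M : ℝ}

namespace C11BoundOnAnnulus

theorem apply_self_eq_zero (h : C11BoundOnAnnulus A A' M)
    (hA : ∀ t : ℝ, 0 < t → ∀ x, A (t • x) = A x) {w : E} (hw : ‖w‖ = 1) : A' w w = 0 :=
  (h.hasFDerivAt w (mem_annulus_of_norm_eq_one hw)).apply_self_eq_zero fun t ht => hA t ht w

theorem tangent_le_of_norm_eq_one (h : C11BoundOnAnnulus A A' M) (hM : 0 ≤ M)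
    (hA : ∀ t : ℝ, 0 < t → ∀ x, A (t • x) = A x) {u w : E} (hu : ‖u‖ = 1) (hw : ‖w‖ = 1) :
    A w * ⟪w, u⟫ + A' w u ≤ A u + 3 * M * ‖u - w‖ ^ 2 := by
  have hAu := abs_le.1 (h.abs_apply_le u (mem_annulus_of_norm_eq_one hu))
  have hAw := abs_le.1 (h.abs_apply_le w (mem_annulus_of_norm_eq_one hw))
  rcases lt_or_ge ‖u - w‖ 1 with hnear | hfar
  · have hseg := segment_subset_annulus hu hw hnear
    have htaylor := (convex_segment w u).norm_image_sub_sub_le_of_lipschitzOnWith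
      (fun z hz => (h.hasFDerivAt z (hseg hz)).hasFDerivWithinAt) (h.lipschitzOnWith.mono hseg)
      (left_mem_segment ℝ w u) (right_mem_segment ℝ w u)
    rw [Real.coe_toNNReal M hM, Real.norm_eq_abs, map_sub, h.apply_self_eq_zero hA hw,
      sub_zero] at htaylor
    have hinner : ⟪w, u⟫ = 1 - ‖u - w‖ ^ 2 / 2 := by
      rw [norm_sub_sq_real, hu, hw, real_inner_comm]; ring
    rw [hinner]
    nlinarith [(abs_le.1 htaylor).1, sq_nonneg ‖u - w‖]
  · have hinner : |⟪w, u⟫| ≤ 1 := by simpa [hu, hw] using abs_real_inner_le_norm w u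
    have hA'u : |A' w u| ≤ M := by
      simpa [hu] using ((A' w).le_opNorm u).trans <| mul_le_mul_of_nonneg_right
        (h.norm_apply_le w (mem_annulus_of_norm_eq_one hw)) (norm_nonneg u)
    have hprod : A w * ⟪w, u⟫ ≤ M := by
      calc A w * ⟪w, u⟫ ≤ |A w| * |⟪w, u⟫| := by rw [← abs_mul]; exact le_abs_self _
        _ ≤ M * 1 := by gcongr; exact abs_le.2 hAw
        _ = M := mul_one M
    nlinarith [(abs_le.1 hA'u).2, one_le_pow₀ (n := 2) hfar]

theorem tangent_le (h : C11BoundOnAnnulus A A' M) (hM : 0 ≤ M)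
    (hA : ∀ t : ℝ, 0 < t → ∀ x, A (t • x) = A x) {w : E} (hw : ‖w‖ = 1) (x : E) :
    A w * ⟪w, x⟫ + A' w x ≤ A x * ‖x‖ + 6 * M * (‖x‖ - ⟪w, x⟫) := by
  rcases eq_or_ne x 0 with rfl | hx
  · simp
  obtain ⟨r, hr, u, hu, rfl⟩ : ∃ r : ℝ, 0 < r ∧ ∃ u : E, ‖u‖ = 1 ∧ x = r • u :=
    ⟨‖x‖, norm_pos_iff.2 hx, ‖x‖⁻¹ • x, norm_smul_inv_norm hx, by
      rw [smul_smul, mul_inv_cancel₀ (norm_ne_zero_iff.2 hx), one_smul]⟩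
  have hsphere := h.tangent_le_of_norm_eq_one hM hA hu hw
  rw [norm_sub_sq_real, hu, hw, real_inner_comm w u] at hsphere
  rw [hA r hr, inner_smul_right, map_smul, smul_eq_mul, norm_smul, Real.norm_of_nonneg hr.le, hu]
  nlinarith [mul_le_mul_of_nonneg_left hsphere hr.le]

theorem abs_mul_norm_le (h : C11BoundOnAnnulus A A' M)
    (hA : ∀ t : ℝ, 0 < t → ∀ x, A (t • x) = A x) (x : E) : |A x * ‖x‖| ≤ M * ‖x‖ := by
  rcases eq_or_ne x 0 with rfl | hx
  · simp
  rw [abs_mul, abs_norm]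
  exact mul_le_mul_of_nonneg_right (h.abs_le_of_ne_zero hA hx) (norm_nonneg x)

theorem mul_norm_add_le (h : C11BoundOnAnnulus A A' M) (hM : 0 ≤ M)
    (hA : ∀ t : ℝ, 0 < t → ∀ x, A (t • x) = A x) (x y : E) :
    A (x + y) * ‖x + y‖ ≤ A x * ‖x‖ + A y * ‖y‖ + 6 * M * (‖x‖ + ‖y‖ - ‖x + y‖) := by
  rcases eq_or_ne (x + y) 0 with hxy | hxy
  · have hx := abs_le.1 (h.abs_mul_norm_le hA x)
    have hy := abs_le.1 (h.abs_mul_norm_le hA y)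
    rw [hxy, norm_zero, mul_zero, sub_zero]
    nlinarith [norm_nonneg x, norm_nonneg y]
  set w := ‖x + y‖⁻¹ • (x + y) with hw_def
  have hw : ‖w‖ = 1 := norm_smul_inv_norm hxy
  have hsum : x + y = ‖x + y‖ • w := by
    rw [hw_def, smul_smul, mul_inv_cancel₀ (norm_ne_zero_iff.2 hxy), one_smul]
  have hinner : ⟪w, x⟫ + ⟪w, y⟫ = ‖x + y‖ := by
    rw [← inner_add_right, hw_def, real_inner_smul_left, real_inner_self_eq_norm_sq]
    field_simp
  have heuler : A' w x + A' w y = 0 := by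
    rw [← map_add, hsum, map_smul, h.apply_self_eq_zero hA hw, smul_zero]
  have hAw : A w = A (x + y) := hA _ (by positivity) _
  calc A (x + y) * ‖x + y‖ = A w * ⟪w, x⟫ + A' w x + (A w * ⟪w, y⟫ + A' w y) := by
        rw [← hAw, ← hinner]; linear_combination -heuler
    _ ≤ A x * ‖x‖ + 6 * M * (‖x‖ - ⟪w, x⟫) + (A y * ‖y‖ + 6 * M * (‖y‖ - ⟪w, y⟫)) :=
        add_le_add (h.tangent_le hM hA hw x) (h.tangent_le hM hA hw y)
    _ = A x * ‖x‖ + A y * ‖y‖ + 6 * M * (‖x‖ + ‖y‖ - ‖x + y‖) := by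
        rw [← hinner]; ring

theorem convexOn_mul_norm_add (h : C11BoundOnAnnulus A A' M) (hM : 0 ≤ M)
    (hA : ∀ t : ℝ, 0 < t → ∀ x, A (t • x) = A x) :
    ConvexOn ℝ univ (fun x : E => A x * ‖x‖ + 6 * M * ‖x‖) := by
  refine convexOn_univ_of_subadditive (fun x y => ?_) fun t ht x => ?_
  · linarith [h.mul_norm_add_le hM hA x y]
  · rcases ht.eq_or_lt with rfl | ht
    · simp
    · rw [hA t ht, norm_smul, Real.norm_of_nonneg ht.le]; ring

end C11BoundOnAnnulus

end InnerProductSpace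

/-- `a ∈ C^{1,1}(S^{d−1})` is expressed through its `0`-homogeneous extension `x ↦ a(x/‖x‖)` on
the annulus `{1/2 < ‖x‖ < 2}`: `M` bounds this function, its derivative `a'` and the Lipschitz
constant of `a'` there. -/
theorem stmt12 :
    ∃ C : ℝ, 0 < C ∧
      ∀ (d : ℕ) (a : EuclideanSpace ℝ (Fin d) → ℝ)
        (a' : EuclideanSpace ℝ (Fin d) → EuclideanSpace ℝ (Fin d) →L[ℝ] ℝ) (M : ℝ),
        0 ≤ M →
        (∀ x ∈ {y : EuclideanSpace ℝ (Fin d) | 1 / 2 < ‖y‖ ∧ ‖y‖ < 2},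
          HasFDerivAt (fun y : EuclideanSpace ℝ (Fin d) => a (‖y‖⁻¹ • y)) (a' x) x) →
        (∀ x ∈ {y : EuclideanSpace ℝ (Fin d) | 1 / 2 < ‖y‖ ∧ ‖y‖ < 2},
          |a (‖x‖⁻¹ • x)| ≤ M) →
        (∀ x ∈ {y : EuclideanSpace ℝ (Fin d) | 1 / 2 < ‖y‖ ∧ ‖y‖ < 2}, ‖a' x‖ ≤ M) →
        LipschitzOnWith M.toNNReal a' {y : EuclideanSpace ℝ (Fin d) | 1 / 2 < ‖y‖ ∧ ‖y‖ < 2} →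
        (∃ f₁ f₂ : EuclideanSpace ℝ (Fin d) → ℝ,
          ConvexOn ℝ univ f₁ ∧ ConvexOn ℝ univ f₂ ∧
          ∀ x, a (‖x‖⁻¹ • x) * ‖x‖ = f₁ x - f₂ x) ∧
        ∀ R : ℝ, 0 < R →
          dcNorm (ball (0 : EuclideanSpace ℝ (Fin d)) R)
              (fun x => a (‖x‖⁻¹ • x) * ‖x‖)
            ≤ ENNReal.ofReal (C * R * M) := by
  refine ⟨13, by norm_num, fun d a a' M hM hd ha ha' hlip => ?_⟩
  have hA : ∀ t : ℝ, 0 < t → ∀ x : EuclideanSpace ℝ (Fin d),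
      a (‖t • x‖⁻¹ • t • x) = a (‖x‖⁻¹ • x) := fun t ht x => by
    rw [inv_norm_smul_smul_of_pos ht]
  have h : C11BoundOnAnnulus (fun y => a (‖y‖⁻¹ • y)) a' M := ⟨hd, ha, ha', hlip⟩
  have hg := h.convexOn_mul_norm_add hM hA
  have hn : ConvexOn ℝ univ fun x : EuclideanSpace ℝ (Fin d) => 6 * M * ‖x‖ :=
    convexOn_univ_norm.smul (by positivity)
  refine ⟨⟨_, _, hg, hn, fun x => by ring⟩, fun R _ => ?_⟩
  have hball : ∀ x ∈ ball (0 : EuclideanSpace ℝ (Fin d)) R, M * ‖x‖ ≤ M * R :=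
    fun x hx => mul_le_mul_of_nonneg_left (mem_ball_zero_iff.1 hx).le hM
  calc dcNorm (ball 0 R) (fun x => a (‖x‖⁻¹ • x) * ‖x‖)
      ≤ ENNReal.ofReal (7 * M * R + 6 * M * R) := by
        refine dcNorm_le_ofReal (hg.subset (subset_univ _) (convex_ball 0 R))
          (hn.subset (subset_univ _) (convex_ball 0 R)) (fun x _ => by ring) (fun x hx => ?_)
          (fun x hx => ?_)
        · have := h.abs_mul_norm_le hA x
          rw [abs_le] at this ⊢
          constructor <;> linarith [hball x hx, mul_nonneg hM (norm_nonneg x)]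
        · rw [abs_of_nonneg (by positivity)]
          linarith [hball x hx]
    _ = ENNReal.ofReal (13 * R * M) := by ring_nf
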